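/- Let V be a variety of τ-algebras. The assignments K ↦ B^K and B ↦ K^B establish a one-to-one correspondence between the subclasses of V_fg closed under finitely generated subalgebras of finite products and the subfamilies of Con(F^V) closed under inverse substitution and finite intersection. -/

import Mathlib

/-! Universal-algebra preamble: functional signatures, algebras (with nonempty
carriers, as usual in universal algebra), terms, homomorphisms, congruences,
quotients, free algebras, and the operators/uniformities of the paper.

Families indexed over the components of a clone are indexed by `k : ℕ`, where
index `k` stands for the component of arity `k + 1` (so all arities `≥ 1`). -/

/-- A functional signature: a type of function symbols together with arities. -/
structure Signature : Type 1 where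
  F : Type
  arity : F → ℕ

/-- A τ-algebra: a nonempty carrier together with an interpretation of each symbol. -/
structure Alg (σ : Signature) : Type 1 where
  carrier : Type
  nonempty : Nonempty carrier
  op : ∀ f : σ.F, (Fin (σ.arity f) → carrier) → carrier

/-- Abstract τ-terms over the variables x_1, …, x_n. -/
inductive Trm (σ : Signature) (n : ℕ) : Type
  | var : Fin n → Trm σ n
  | app : ∀ f : σ.F, (Fin (σ.arity f) → Trm σ n) → Trm σ n

variable {σ : Signature}

/-- Evaluation of a term in an algebra under a valuation of the variables. -/
def Trm.eval {n : ℕ} (A : Alg σ) (v : Fin n → A.carrier) : Trm σ n → A.carrier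
  | .var i => v i
  | .app f ts => A.op f fun i => Trm.eval A v (ts i)

/-- The term operation `t^A` induced on `A` by the term `t`. -/
def termOp {n : ℕ} (A : Alg σ) (t : Trm σ n) : (Fin n → A.carrier) → A.carrier :=
  fun v => t.eval A v

/-- Homomorphisms of τ-algebras. -/
def IsHom (A B : Alg σ) (h : A.carrier → B.carrier) : Prop :=
  ∀ (f : σ.F) (x : Fin (σ.arity f) → A.carrier), h (A.op f x) = B.op f fun i => h (x i)

/-- Isomorphism of τ-algebras. -/
def Isomorphic (A B : Alg σ) : Prop :=
  ∃ h : A.carrier → B.carrier, IsHom A B h ∧ Function.Bijective h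

/-- Membership in the subuniverse generated by `S`. -/
inductive InClosure (A : Alg σ) (S : Set A.carrier) : A.carrier → Prop
  | base : ∀ a ∈ S, InClosure A S a
  | app : ∀ (f : σ.F) (x : Fin (σ.arity f) → A.carrier),
      (∀ i, InClosure A S (x i)) → InClosure A S (A.op f x)

/-- An algebra is finitely generated if a finite subset generates it. -/
def FinGen (A : Alg σ) : Prop :=
  ∃ S : Set A.carrier, S.Finite ∧ ∀ a, InClosure A S a

/-- Product of a family of algebras. -/
def PiAlg {ι : Type} (A : ι → Alg σ) : Alg σ where
  carrier := ∀ i, (A i).carrier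
  nonempty := ⟨fun i => Classical.choice (A i).nonempty⟩
  op f x := fun i => (A i).op f fun j => x j i

/-- A congruence: an equivalence relation compatible with all operations. -/
def IsCongruence (A : Alg σ) (r : A.carrier → A.carrier → Prop) : Prop :=
  Equivalence r ∧ ∀ (f : σ.F) (x y : Fin (σ.arity f) → A.carrier),
    (∀ i, r (x i) (y i)) → r (A.op f x) (A.op f y)

/-- Bundled congruences on an algebra. -/
structure Cong (A : Alg σ) : Type where
  r : A.carrier → A.carrier → Prop
  iscon : IsCongruence A r

/-- The quotient algebra of `A` by (a relation which is intended to be) a congruence. -/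
noncomputable def quotAlg (A : Alg σ) (r : A.carrier → A.carrier → Prop) : Alg σ where
  carrier := Quot r
  nonempty := ⟨Quot.mk r (Classical.choice A.nonempty)⟩
  op f x := Quot.mk r (A.op f fun i => (x i).out)

/-- The subalgebra of `A` on a nonempty subset closed under the operations. -/
def subAlg (A : Alg σ) (S : Set A.carrier) (hne : S.Nonempty)
    (hcl : ∀ (f : σ.F) (x : Fin (σ.arity f) → A.carrier), (∀ i, x i ∈ S) → A.op f x ∈ S) :
    Alg σ where
  carrier := {a : A.carrier // a ∈ S}
  nonempty := ⟨⟨hne.choose, hne.choose_spec⟩⟩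
  op f x := ⟨A.op f fun i => (x i).1, hcl f _ fun i => (x i).2⟩

/-- The subalgebra of `A` generated by a nonempty subset `S`. -/
def genSubAlg (A : Alg σ) (S : Set A.carrier) (hne : S.Nonempty) : Alg σ where
  carrier := {a : A.carrier // InClosure A S a}
  nonempty := ⟨⟨hne.choose, InClosure.base _ hne.choose_spec⟩⟩
  op f x := ⟨A.op f fun i => (x i).1, InClosure.app f _ fun i => (x i).2⟩

/-- H: homomorphic images of members of `K`. -/
def Hcl (K : Set (Alg σ)) : Set (Alg σ) :=
  {B | ∃ A ∈ K, ∃ h : A.carrier → B.carrier, IsHom A B h ∧ Function.Surjective h}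

/-- I: isomorphic copies of members of `K`. -/
def Icl (K : Set (Alg σ)) : Set (Alg σ) := {B | ∃ A ∈ K, Isomorphic A B}

/-- S: isomorphic copies of subalgebras (i.e. algebras embedding into members) of `K`. -/
def Scl (K : Set (Alg σ)) : Set (Alg σ) :=
  {B | ∃ A ∈ K, ∃ e : B.carrier → A.carrier, IsHom B A e ∧ Function.Injective e}

/-- P_f: isomorphic copies of finite (nonempty) products of members of `K`. -/
def Pfcl (K : Set (Alg σ)) : Set (Alg σ) :=
  {B | ∃ (n : ℕ) (A : Fin (n + 1) → Alg σ), (∀ i, A i ∈ K) ∧ Isomorphic (PiAlg A) B}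

/-- S_f: isomorphic copies of finitely generated subalgebras of members of `K`. -/
def Sf (K : Set (Alg σ)) : Set (Alg σ) :=
  {B | FinGen B ∧ ∃ A ∈ K, ∃ e : B.carrier → A.carrier, IsHom B A e ∧ Function.Injective e}

/-- S P_f: isomorphic copies of finitely generated subalgebras of finite products
of members of `K`. -/
def SPf (K : Set (Alg σ)) : Set (Alg σ) :=
  {B | FinGen B ∧ ∃ (n : ℕ) (A : Fin (n + 1) → Alg σ), (∀ i, A i ∈ K) ∧
    ∃ e : B.carrier → (PiAlg A).carrier, IsHom B (PiAlg A) e ∧ Function.Injective e}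

/-- A pseudovariety of finitely generated algebras: a class of finitely generated
algebras closed under homomorphic images and under isomorphic copies of finitely
generated subalgebras of finite products of its members. -/
def IsPseudovarietyFG (C : Set (Alg σ)) : Prop :=
  (∀ A ∈ C, FinGen A) ∧ Hcl C ⊆ C ∧ SPf C ⊆ C

/-- A pseudovariety of finite algebras: a class of finite algebras closed under
finite products, subalgebras and homomorphic images. -/
def IsPseudovarietyFin (C : Set (Alg σ)) : Prop :=
  (∀ A ∈ C, Finite A.carrier) ∧ Hcl C ⊆ C ∧ Scl C ⊆ C ∧ Pfcl C ⊆ C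

/-- A variety: a class closed under arbitrary products, subalgebras and
homomorphic images. -/
def IsVariety (V : Set (Alg σ)) : Prop :=
  (∀ (ι : Type) (A : ι → Alg σ), (∀ i, A i ∈ V) → PiAlg A ∈ V) ∧
  Scl V ⊆ V ∧ Hcl V ⊆ V

/-- The identities of the class `C`: `s` and `t` are identified iff they induce the
same operation on every member of `C`. -/
def FreeCon (C : Set (Alg σ)) (n : ℕ) : Trm σ n → Trm σ n → Prop :=
  fun s t => ∀ A ∈ C, ∀ v : Fin n → A.carrier, s.eval A v = t.eval A v

/-- `freeAlg C k` is `F_{k+1}^C`, the free algebra for `C` on `k + 1` generators: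
the term algebra on the variables `x_1, …, x_{k+1}` modulo the identities of `C`.
(The index `k` stands for arity `k + 1`, so all components have arity `≥ 1`.) -/
noncomputable def freeAlg (C : Set (Alg σ)) (k : ℕ) : Alg σ where
  carrier := Quot (FreeCon C (k + 1))
  nonempty := ⟨Quot.mk _ (Trm.var 0)⟩
  op f x := Quot.mk _ (Trm.app f fun i => (x i).out)

/-- The finitely generated members of `V`. -/
def Vfg (V : Set (Alg σ)) : Set (Alg σ) := {A | A ∈ V ∧ FinGen A}

/-- `B^K`: the congruences of the free algebras whose quotient is isomorphic to a
member of `K`. -/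
def BK (V K : Set (Alg σ)) (k : ℕ) : Set (Cong (freeAlg V k)) :=
  {θ | quotAlg (freeAlg V k) θ.r ∈ Icl K}

/-- `K^B`: isomorphic copies of the quotients of free algebras by congruences in `B`. -/
def KB (V : Set (Alg σ)) (B : ∀ k : ℕ, Set (Cong (freeAlg V k))) : Set (Alg σ) :=
  Icl {A | ∃ (k : ℕ), ∃ θ ∈ B k, A = quotAlg (freeAlg V k) θ.r}

/-- `θ/t̄`: the inverse substitution of the congruence `θ` along the tuple `t̄`;
`s (θ/t̄) s'` iff `s(t₁,…,t_m) θ s'(t₁,…,t_m)`. -/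
noncomputable def conSubstRel {V : Set (Alg σ)} {k : ℕ} (θ : Cong (freeAlg V k)) {m : ℕ}
    (t : Fin (m + 1) → (freeAlg V k).carrier) :
    (freeAlg V m).carrier → (freeAlg V m).carrier → Prop :=
  fun s s' => θ.r (Trm.eval (freeAlg V k) t s.out) (Trm.eval (freeAlg V k) t s'.out)

/-- A family of congruences is closed under inverse substitution. -/
def InvSubstClosed (V : Set (Alg σ)) (B : ∀ k : ℕ, Set (Cong (freeAlg V k))) : Prop :=
  ∀ (k m : ℕ), ∀ θ ∈ B k, ∀ t : Fin (m + 1) → (freeAlg V k).carrier,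
    ∃ θ' ∈ B m, θ'.r = conSubstRel θ t

/-- A family of congruences is closed under finite intersections (componentwise). -/
def InterClosed (V : Set (Alg σ)) (B : ∀ k : ℕ, Set (Cong (freeAlg V k))) : Prop :=
  ∀ (k n : ℕ) (θs : Fin (n + 1) → Cong (freeAlg V k)), (∀ i, θs i ∈ B k) →
    ∃ θ' ∈ B k, θ'.r = fun a b => ∀ i, (θs i).r a b

/-- A family of congruences is upward closed (componentwise). -/
def UpClosed (V : Set (Alg σ)) (B : ∀ k : ℕ, Set (Cong (freeAlg V k))) : Prop :=
  ∀ (k : ℕ), ∀ θ ∈ B k, ∀ ψ : Cong (freeAlg V k), (∀ a b, θ.r a b → ψ.r a b) → ψ ∈ B k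

/-- A filter on `X × X` is a uniformity: every entourage contains the diagonal, the
converse of an entourage is an entourage, and the generalised triangle inequality. -/
def IsUniformity {X : Type} (u : Filter (X × X)) : Prop :=
  (∀ U ∈ u, ∀ x : X, (x, x) ∈ U) ∧
  (∀ U ∈ u, {p : X × X | (p.2, p.1) ∈ U} ∈ u) ∧
  (∀ U ∈ u, ∃ W ∈ u, ∀ x y z : X, (x, y) ∈ W → (y, z) ∈ W → (x, z) ∈ U)

/-- `U^C` (the component of index `k`, i.e. of arity `k + 1`): the filter on
`F_{k+1}^V × F_{k+1}^V` generated by the congruences `θ` of `F_{k+1}^V` such that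
`F_{k+1}^V/θ` is isomorphic to a member of `C`. -/
noncomputable def unifC (V C : Set (Alg σ)) (k : ℕ) :
    Filter ((freeAlg V k).carrier × (freeAlg V k).carrier) :=
  Filter.generate
    {U | ∃ θ : Cong (freeAlg V k), quotAlg (freeAlg V k) θ.r ∈ Icl C ∧ U = {p | θ.r p.1 p.2}}

/-- The `(k+1)`-ary part of `Clo(A)`: the `(k+1)`-ary term operations of `A`. -/
def CloK (A : Alg σ) (k : ℕ) : Type :=
  {g : (Fin (k + 1) → A.carrier) → A.carrier // ∃ t : Trm σ (k + 1), g = termOp A t}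

/-- The uniformity of pointwise convergence on the `(k+1)`-ary part of `Clo(A)`:
generated by the sets `U_ā = {(f, g) | f(ā) = g(ā)}`. -/
noncomputable def ptwUnif (A : Alg σ) (k : ℕ) : Filter (CloK A k × CloK A k) :=
  Filter.generate {U | ∃ a : Fin (k + 1) → A.carrier, U = {p | p.1.1 a = p.2.1 a}}

/-- The natural map from the free algebra for `C` onto `Clo(A)`, sending the class
of a term `t` to the term operation `t^A`. -/
noncomputable def natMap (C : Set (Alg σ)) (A : Alg σ) (k : ℕ) :
    (freeAlg C k).carrier → CloK A k :=
  fun q => ⟨termOp A q.out, q.out, rfl⟩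

/-- The natural map between the free algebras of two classes (class of `t` to
class of `t`). -/
noncomputable def freeNatMap (C D : Set (Alg σ)) (k : ℕ) :
    (freeAlg C k).carrier → (freeAlg D k).carrier :=
  fun q => Quot.mk _ q.out

/-- The natural map `Clo(A) → Clo(B)`, sending `t^A` to `t^B`. -/
noncomputable def cloNatMap (A B : Alg σ) (k : ℕ) : CloK A k → CloK B k :=
  fun g => ⟨termOp B (Classical.choose g.2), Classical.choose g.2, rfl⟩

/-- The variety generated by `A`. -/
def varietyGen (A : Alg σ) : Set (Alg σ) :=
  {B | ∀ V : Set (Alg σ), IsVariety V → A ∈ V → B ∈ V}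

/-- The pseudovariety generated by `A`: the smallest class containing `A` closed
under finite products, subalgebras and homomorphic images. -/
def psvGen (A : Alg σ) : Set (Alg σ) :=
  {B | ∀ C : Set (Alg σ), A ∈ C → Hcl C ⊆ C → Scl C ⊆ C → Pfcl C ⊆ C → B ∈ C}

/-- The pseudovariety of finitely generated algebras generated by `A`: the finitely
generated members of the pseudovariety generated by `A`. -/
def psvFgGen (A : Alg σ) : Set (Alg σ) := {B | FinGen B ∧ B ∈ psvGen A}

/-! A congruence `θ` of `F_k^V` lies in `B^K` exactly when it is the kernel of a homomorphism
from `F_k^V` into a finite product of members of `K`: then `F_k^V/θ` embeds into that product,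
and `SPf K = K` puts it in `K`. Kernels of this kind are visibly closed under `θ ↦ θ/t̄`
(precompose with the substitution `t̄`) and under finite intersections (take the product).
Conversely, since `F_m^V` is free, every homomorphism `F_m^V → F_k^V/ψ` factors through a
substitution, so its kernel is `ψ/t̄`. Hence the kernel of a homomorphism from `F_m^V` into a
finite product of members of `K^B` is an intersection of inverse substitutions of members of `B`,
which gives `SPf (K^B) = K^B` and `B^{K^B} = B`. -/

theorem isHom_comp {A B C : Alg σ} {h : A.carrier → B.carrier} {g : B.carrier → C.carrier}
    (hh : IsHom A B h) (hg : IsHom B C g) : IsHom A C (g ∘ h) := by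
  intro f x
  show g (h (A.op f x)) = _
  rw [hh, hg]
  rfl

theorem isHom_pi {ι : Type} {B : Alg σ} {A : ι → Alg σ}
    {g : ∀ i, B.carrier → (A i).carrier} (hg : ∀ i, IsHom B (A i) (g i)) : IsHom B (PiAlg A) fun b i => g i b :=
  fun f x => funext fun i => hg i f x

theorem isHom_ofBijective_symm {A B : Alg σ} {h : A.carrier → B.carrier} (hh : IsHom A B h)
    (hb : Function.Bijective h) : IsHom B A (Equiv.ofBijective h hb).symm := by
  intro f x
  apply hb.1
  rw [hh]
  simp only [Equiv.ofBijective_apply_symm_apply]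

theorem Isomorphic.refl (A : Alg σ) : Isomorphic A A :=
  ⟨id, fun _ _ => rfl, Function.bijective_id⟩

theorem Isomorphic.symm {A B : Alg σ} (h : Isomorphic A B) : Isomorphic B A := by
  obtain ⟨f, hf, hb⟩ := h
  exact ⟨_, isHom_ofBijective_symm hf hb, (Equiv.ofBijective f hb).symm.bijective⟩

theorem Isomorphic.trans {A B C : Alg σ} (h₁ : Isomorphic A B) (h₂ : Isomorphic B C) :
    Isomorphic A C := by
  obtain ⟨f, hf, hfb⟩ := h₁
  obtain ⟨g, hg, hgb⟩ := h₂
  exact ⟨g ∘ f, isHom_comp hf hg, hgb.comp hfb⟩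

theorem Cong.ext {A : Alg σ} {θ₁ θ₂ : Cong A} (h : θ₁.r = θ₂.r) : θ₁ = θ₂ := by
  cases θ₁; cases θ₂; cases h; rfl

theorem InClosure.mono {A : Alg σ} {S T : Set A.carrier} (hST : S ⊆ T) {a : A.carrier}
    (h : InClosure A S a) : InClosure A T a := by
  induction h with
  | base a ha => exact .base a (hST ha)
  | app f x _ ih => exact .app f x ih

theorem InClosure.image {A B : Alg σ} {h : A.carrier → B.carrier} (hh : IsHom A B h)
    {S : Set A.carrier} {a : A.carrier} (ha : InClosure A S a) : InClosure B (h '' S) (h a) := by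
  induction ha with
  | base a ha => exact .base _ ⟨a, ha, rfl⟩
  | app f x _ ih => rw [hh]; exact .app f _ ih

theorem InClosure.mem_range {A B : Alg σ} {h : A.carrier → B.carrier} (hh : IsHom A B h)
    {S : Set B.carrier} (hS : S ⊆ Set.range h) {b : B.carrier} (hb : InClosure B S b) :
    b ∈ Set.range h := by
  induction hb with
  | base b hb => exact hS hb
  | app f x _ ih =>
    choose a ha using ih
    exact ⟨A.op f a, by rw [hh]; exact congrArg _ (funext ha)⟩

theorem InClosure.eq_of_eqOn {A B : Alg σ} {g₁ g₂ : A.carrier → B.carrier}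
    (h₁ : IsHom A B g₁) (h₂ : IsHom A B g₂) {S : Set A.carrier} (hS : Set.EqOn g₁ g₂ S)
    {a : A.carrier} (ha : InClosure A S a) : g₁ a = g₂ a := by
  induction ha with
  | base a ha => exact hS ha
  | app f x _ ih => rw [h₁, h₂]; exact congrArg _ (funext ih)

theorem finGen_of_surjective {A B : Alg σ} (hA : FinGen A) {h : A.carrier → B.carrier}
    (hh : IsHom A B h) (hs : Function.Surjective h) : FinGen B := by
  obtain ⟨S, hSf, hSg⟩ := hA
  refine ⟨h '' S, hSf.image h, fun b => ?_⟩
  obtain ⟨a, rfl⟩ := hs b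
  exact (hSg a).image hh

theorem FinGen.exists_fin_generators {A : Alg σ} (h : FinGen A) :
    ∃ (k : ℕ) (a : Fin (k + 1) → A.carrier), ∀ b, InClosure A (Set.range a) b := by
  obtain ⟨S, hSf, hSg⟩ := h
  have := hSf.to_subtype
  obtain ⟨k, ⟨e⟩⟩ := Finite.exists_equiv_fin S
  refine ⟨k, Fin.cons (Classical.choice A.nonempty) fun i => (e.symm i).1, fun b => ?_⟩
  refine (hSg b).mono fun s hs => ?_
  exact ⟨(e ⟨s, hs⟩).succ, by simp⟩

theorem FinGen.of_isomorphic {A B : Alg σ} (hA : FinGen A) (h : Isomorphic A B) : FinGen B := by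
  obtain ⟨f, hf, hb⟩ := h
  exact finGen_of_surjective hA hf hb.2

abbrev kerRel {α β : Type} (h : α → β) : α → α → Prop := fun a b => h a = h b

theorem kerRel_comp_of_injective {α β γ : Type} {g : β → γ} (hg : Function.Injective g)
    (h : α → β) : kerRel (g ∘ h) = kerRel h :=
  funext₂ fun _ _ => propext hg.eq_iff

theorem kerRel_pi {α ι : Type} {β : ι → Type} (g : ∀ i, α → β i) :
    kerRel (fun a i => g i a) = fun a b => ∀ i, g i a = g i b :=
  funext₂ fun _ _ => propext funext_iff

theorem kerRel_quot_mk {α : Type} {r : α → α → Prop} (hr : Equivalence r) :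
    kerRel (Quot.mk r) = r :=
  funext₂ fun _ _ => propext (Quot.eq.trans hr.eqvGen_iff)

theorem isCongruence_kerRel {A B : Alg σ} {h : A.carrier → B.carrier} (hh : IsHom A B h) :
    IsCongruence A (kerRel h) := by
  refine ⟨⟨fun _ => rfl, Eq.symm, Eq.trans⟩, fun f x y hxy => ?_⟩
  show h (A.op f x) = h (A.op f y)
  rw [hh, hh]
  exact congrArg _ (funext hxy)

theorem quot_out_rel {α : Type} {r : α → α → Prop} (hr : Equivalence r) (a : α) :
    r (Quot.mk r a).out a :=
  (Quot.eq.trans hr.eqvGen_iff).mp (Quot.out_eq _)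

theorem isHom_quot_mk {A : Alg σ} {r : A.carrier → A.carrier → Prop} (hr : IsCongruence A r) :
    IsHom A (quotAlg A r) (Quot.mk r) := fun _ x =>
  Quot.sound (hr.2 _ _ _ fun i => hr.1.symm (quot_out_rel hr.1 (x i)))

theorem finGen_quotAlg {A : Alg σ} (hA : FinGen A) {r : A.carrier → A.carrier → Prop}
    (hr : IsCongruence A r) : FinGen (quotAlg A r) :=
  finGen_of_surjective hA (isHom_quot_mk hr) Quot.mk_surjective

theorem isHom_quot_lift_kerRel {A B : Alg σ} {h : A.carrier → B.carrier} (hh : IsHom A B h) :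
    IsHom (quotAlg A (kerRel h)) B (Quot.lift h fun _ _ => id) := fun f x =>
  (hh f _).trans (congrArg (B.op f) (funext fun i => congrArg (Quot.lift h _) (x i).out_eq))

theorem quot_lift_kerRel_injective {α β : Type} (h : α → β) :
    Function.Injective (Quot.lift h fun _ _ => id : Quot (kerRel h) → β) := by
  rintro ⟨a⟩ ⟨b⟩ hab
  exact Quot.sound hab

theorem isomorphic_quotAlg_kerRel {A B : Alg σ} {h : A.carrier → B.carrier} (hh : IsHom A B h)
    (hs : Function.Surjective h) : Isomorphic (quotAlg A (kerRel h)) B :=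
  ⟨_, isHom_quot_lift_kerRel hh, quot_lift_kerRel_injective h,
    fun b => let ⟨a, ha⟩ := hs b; ⟨Quot.mk _ a, ha⟩⟩

theorem exists_isHom_kerRel_eq_of_quotAlg_mem_Icl {K : Set (Alg σ)} {A : Alg σ}
    {r : A.carrier → A.carrier → Prop} (hr : IsCongruence A r) (h : quotAlg A r ∈ Icl K) :
    ∃ B ∈ K, ∃ g : A.carrier → B.carrier, IsHom A B g ∧ r = kerRel g := by
  obtain ⟨B, hB, f, hf, hfb⟩ := h
  refine ⟨B, hB, _, isHom_comp (isHom_quot_mk hr) (isHom_ofBijective_symm hf hfb), ?_⟩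
  exact funext₂ fun a b => propext ((Equiv.ofBijective f hfb).symm.injective.eq_iff.trans
    (Quot.eq.trans hr.1.eqvGen_iff)).symm

theorem mem_SPf_of_injective {K : Set (Alg σ)} {A B : Alg σ} (hB : FinGen B) (hA : A ∈ K)
    {e : B.carrier → A.carrier} (he : IsHom B A e) (hinj : Function.Injective e) : B ∈ SPf K :=
  ⟨hB, 0, fun _ => A, fun _ => hA, fun b _ => e b, isHom_pi fun _ => he,
    fun _ _ h => hinj (congrFun h 0)⟩

theorem subset_SPf {K : Set (Alg σ)} (hK : ∀ A ∈ K, FinGen A) : K ⊆ SPf K := fun A hA =>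
  mem_SPf_of_injective (hK A hA) hA (fun _ _ => rfl) Function.injective_id

theorem Icl_subset_of_SPf_subset {K : Set (Alg σ)} (hK : SPf K ⊆ K)
    (hfg : ∀ A ∈ K, FinGen A) : Icl K ⊆ K := by
  rintro B ⟨A, hA, hAB⟩
  obtain ⟨e, he, heb⟩ := hAB.symm
  exact hK (mem_SPf_of_injective ((hfg A hA).of_isomorphic hAB) hA he heb.1)

theorem quotAlg_kerRel_mem_SPf {K : Set (Alg σ)} {A : Alg σ} (hA : FinGen A) {n : ℕ}
    {X : Fin (n + 1) → Alg σ} (hX : ∀ i, X i ∈ K) {h : A.carrier → (PiAlg X).carrier}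
    (hh : IsHom A (PiAlg X) h) : quotAlg A (kerRel h) ∈ SPf K :=
  ⟨finGen_quotAlg hA (isCongruence_kerRel hh), n, X, hX, _, isHom_quot_lift_kerRel hh,
    quot_lift_kerRel_injective h⟩

section FreeAlgebra

variable {C : Set (Alg σ)}

theorem freeCon_equivalence (C : Set (Alg σ)) (n : ℕ) : Equivalence (FreeCon C n) :=
  ⟨fun _ _ _ _ => rfl, fun h A hA v => (h A hA v).symm,
    fun h₁ h₂ A hA v => (h₁ A hA v).trans (h₂ A hA v)⟩

/-- The generator `x_{j+1}` of `F_{k+1}^C`. -/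
def freeVar (C : Set (Alg σ)) (k : ℕ) (j : Fin (k + 1)) : (freeAlg C k).carrier :=
  Quot.mk _ (Trm.var j)

theorem freeAlg_op_mk (C : Set (Alg σ)) (k : ℕ) (f : σ.F)
    (ts : Fin (σ.arity f) → Trm σ (k + 1)) :
    (freeAlg C k).op f (fun i => Quot.mk _ (ts i)) = Quot.mk _ (Trm.app f ts) :=
  Quot.sound fun A hA v =>
    congrArg (A.op f) (funext fun i => quot_out_rel (freeCon_equivalence C _) (ts i) A hA v)

theorem inClosure_range_freeVar (k : ℕ) (q : (freeAlg C k).carrier) :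
    InClosure (freeAlg C k) (Set.range (freeVar C k)) q := by
  induction q using Quot.ind with
  | _ t =>
    induction t with
    | var j => exact .base _ ⟨j, rfl⟩
    | app f ts ih => rw [← freeAlg_op_mk]; exact .app f _ ih

theorem freeAlg_finGen (C : Set (Alg σ)) (k : ℕ) : FinGen (freeAlg C k) :=
  ⟨_, Set.finite_range _, inClosure_range_freeVar k⟩

theorem freeAlg_hom_ext {k : ℕ} {A : Alg σ} {g₁ g₂ : (freeAlg C k).carrier → A.carrier}
    (h₁ : IsHom (freeAlg C k) A g₁) (h₂ : IsHom (freeAlg C k) A g₂)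
    (hv : ∀ j, g₁ (freeVar C k j) = g₂ (freeVar C k j)) : g₁ = g₂ :=
  funext fun q =>
    (inClosure_range_freeVar k q).eq_of_eqOn h₁ h₂ (by rintro _ ⟨j, rfl⟩; exact hv j)

/-- Evaluation at a chosen representative term: a homomorphism only when `A ∈ C`. -/
noncomputable def freeEval (C : Set (Alg σ)) {k : ℕ} (A : Alg σ)
    (v : Fin (k + 1) → A.carrier) : (freeAlg C k).carrier → A.carrier :=
  fun q => q.out.eval A v

theorem freeEval_mk {k : ℕ} {A : Alg σ} (hA : A ∈ C) (v : Fin (k + 1) → A.carrier)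
    (t : Trm σ (k + 1)) : freeEval C A v (Quot.mk _ t) = t.eval A v :=
  quot_out_rel (freeCon_equivalence C _) t A hA v

theorem freeEval_freeVar {k : ℕ} {A : Alg σ} (hA : A ∈ C) (v : Fin (k + 1) → A.carrier)
    (j : Fin (k + 1)) : freeEval C A v (freeVar C k j) = v j :=
  freeEval_mk hA v _

theorem isHom_freeEval {k : ℕ} {A : Alg σ} (hA : A ∈ C) (v : Fin (k + 1) → A.carrier) :
    IsHom (freeAlg C k) A (freeEval C A v) := fun _ _ =>
  freeEval_mk hA v _

theorem exists_isHom_surjective_of_finGen {A : Alg σ} (hA : A ∈ C) (hfg : FinGen A) :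
    ∃ (k : ℕ) (h : (freeAlg C k).carrier → A.carrier),
      IsHom (freeAlg C k) A h ∧ Function.Surjective h := by
  obtain ⟨k, a, hgen⟩ := hfg.exists_fin_generators
  refine ⟨k, freeEval C A a, isHom_freeEval hA a, fun b => (hgen b).mem_range
    (isHom_freeEval hA a) ?_⟩
  rintro _ ⟨j, rfl⟩
  exact ⟨_, freeEval_freeVar hA a j⟩

/-- The free algebra embeds into a product of members of `V`, one factor for each pair of terms
that `V` does not identify. -/
theorem freeAlg_mem {V : Set (Alg σ)} (hV : IsVariety V) (k : ℕ) : freeAlg V k ∈ V := by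
  have hsep : ∀ p : {p : Trm σ (k + 1) × Trm σ (k + 1) // ¬ FreeCon V (k + 1) p.1 p.2},
      ∃ A ∈ V, ∃ v : Fin (k + 1) → A.carrier, p.1.1.eval A v ≠ p.1.2.eval A v := by
    rintro ⟨⟨s, t⟩, hst⟩
    simpa [FreeCon] using hst
  choose W hW v hv using hsep
  refine hV.2.1 ⟨PiAlg W, hV.1 _ W hW, _, isHom_pi fun p => isHom_freeEval (hW p) (v p), ?_⟩
  intro q q' hqq
  rw [← q.out_eq, ← q'.out_eq]
  refine Quot.sound (by_contra fun hc => hv ⟨(q.out, q'.out), hc⟩ ?_)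
  exact congrFun hqq ⟨(q.out, q'.out), hc⟩

end FreeAlgebra

section Correspondence

variable {V : Set (Alg σ)}

theorem conSubstRel_eq_kerRel_comp {k m : ℕ} {θ : Cong (freeAlg V k)} {β : Type}
    {g : (freeAlg V k).carrier → β} (hθ : θ.r = kerRel g)
    (t : Fin (m + 1) → (freeAlg V k).carrier) :
    conSubstRel θ t = kerRel (g ∘ freeEval V (freeAlg V k) t) := by
  unfold conSubstRel
  rw [hθ]
  rfl

theorem exists_conSubstRel_eq_kerRel {k m : ℕ} (hF : freeAlg V k ∈ V) (θ : Cong (freeAlg V k))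
    {g : (freeAlg V m).carrier → Quot θ.r}
    (hg : IsHom (freeAlg V m) (quotAlg (freeAlg V k) θ.r) g) :
    ∃ t : Fin (m + 1) → (freeAlg V k).carrier, conSubstRel θ t = kerRel g := by
  refine ⟨fun j => (g (freeVar V m j)).out, ?_⟩
  have hfac : Quot.mk θ.r ∘ freeEval V (freeAlg V k) (fun j => (g (freeVar V m j)).out) = g :=
    freeAlg_hom_ext (isHom_comp (isHom_freeEval hF _) (isHom_quot_mk θ.iscon)) hg
      fun j => (congrArg (Quot.mk θ.r) (freeEval_freeVar hF _ j)).trans (Quot.out_eq _)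
  exact (conSubstRel_eq_kerRel_comp (kerRel_quot_mk θ.iscon.1).symm _).trans (congrArg kerRel hfac)

theorem mem_BK_of_r_eq_forall_eq {K : Set (Alg σ)} (hK : SPf K ⊆ K) {k n : ℕ}
    {θ : Cong (freeAlg V k)} {A : Fin (n + 1) → Alg σ} (hA : ∀ i, A i ∈ K)
    {g : ∀ i, (freeAlg V k).carrier → (A i).carrier}
    (hg : ∀ i, IsHom (freeAlg V k) (A i) (g i))
    (hθ : θ.r = fun a b => ∀ i, g i a = g i b) : θ ∈ BK V K k := by
  show quotAlg (freeAlg V k) θ.r ∈ Icl K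
  rw [hθ, ← kerRel_pi]
  exact ⟨_, hK (quotAlg_kerRel_mem_SPf (freeAlg_finGen V k) hA (isHom_pi hg)), .refl _⟩

theorem invSubstClosed_BK (hV : IsVariety V) {K : Set (Alg σ)} (hK : SPf K ⊆ K) :
    InvSubstClosed V (BK V K) := by
  intro k m θ hθ t
  obtain ⟨A, hA, g, hg, hθg⟩ := exists_isHom_kerRel_eq_of_quotAlg_mem_Icl θ.iscon hθ
  have hsub := conSubstRel_eq_kerRel_comp hθg t
  have hcomp := isHom_comp (isHom_freeEval (freeAlg_mem hV k) t) hg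
  have hcong : IsCongruence (freeAlg V m) (conSubstRel θ t) := hsub ▸ isCongruence_kerRel hcomp
  refine ⟨⟨_, hcong⟩, mem_BK_of_r_eq_forall_eq hK (n := 0) (fun _ => hA) (fun _ => hcomp) 
    (hsub.trans (funext₂ fun _ _ => propext (forall_const _).symm)), rfl⟩

theorem interClosed_BK {K : Set (Alg σ)} (hK : SPf K ⊆ K) : InterClosed V (BK V K) := by
  intro k n θs hθs
  choose A hA g hg hθg using fun i =>
    exists_isHom_kerRel_eq_of_quotAlg_mem_Icl (θs i).iscon (hθs i)
  have hinter : (fun a b => ∀ i, (θs i).r a b) = fun a b => ∀ i, g i a = g i b := by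
    simp only [hθg]
  have hcong : IsCongruence (freeAlg V k) fun a b => ∀ i, (θs i).r a b :=
    hinter ▸ kerRel_pi g ▸ isCongruence_kerRel (isHom_pi hg)
  exact ⟨⟨_, hcong⟩, mem_BK_of_r_eq_forall_eq (θ := ⟨_, hcong⟩) hK hA hg hinter, rfl⟩

theorem KB_BK {K : Set (Alg σ)} (hKfg : K ⊆ Vfg V) (hK : SPf K ⊆ K) : KB V (BK V K) = K := by
  have hfg : ∀ A ∈ K, FinGen A := fun A hA => (hKfg hA).2
  refine (Set.Subset.antisymm ?_ ?_)
  · rintro C ⟨_, ⟨k, θ, ⟨A, hA, hAθ⟩, rfl⟩, hθC⟩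
    exact Icl_subset_of_SPf_subset hK hfg ⟨A, hA, hAθ.trans hθC⟩
  · intro A hA
    obtain ⟨k, h, hh, hs⟩ := exists_isHom_surjective_of_finGen (hKfg hA).1 (hfg A hA)
    have hiso := isomorphic_quotAlg_kerRel hh hs
    exact ⟨_, ⟨k, ⟨_, isCongruence_kerRel hh⟩, ⟨A, hA, hiso.symm⟩, rfl⟩, hiso⟩

variable {B : ∀ k : ℕ, Set (Cong (freeAlg V k))}

theorem exists_injective_of_mem_KB {A : Alg σ} (hA : A ∈ KB V B) :
    ∃ (k : ℕ) (ψ : Cong (freeAlg V k)), ψ ∈ B k ∧ ∃ j : A.carrier → Quot ψ.r,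
      IsHom A (quotAlg (freeAlg V k) ψ.r) j ∧ Function.Injective j := by
  obtain ⟨_, ⟨k, ψ, hψ, rfl⟩, hiso⟩ := hA
  obtain ⟨j, hj, hjb⟩ := hiso.symm
  exact ⟨k, ψ, hψ, j, hj, hjb.1⟩

theorem exists_mem_eq_kerRel (hV : IsVariety V) (hB : InvSubstClosed V B) {k m : ℕ}
    {ψ : Cong (freeAlg V k)} (hψ : ψ ∈ B k) {g : (freeAlg V m).carrier → Quot ψ.r}
    (hg : IsHom (freeAlg V m) (quotAlg (freeAlg V k) ψ.r) g) :
    ∃ θ ∈ B m, θ.r = kerRel g := by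
  obtain ⟨t, ht⟩ := exists_conSubstRel_eq_kerRel (freeAlg_mem hV k) ψ hg
  obtain ⟨θ, hθ, hθt⟩ := hB k m ψ hψ t
  exact ⟨θ, hθ, hθt.trans ht⟩

theorem KB_subset_Vfg (hV : IsVariety V) : KB V B ⊆ Vfg V := by
  rintro C ⟨_, ⟨k, θ, -, rfl⟩, f, hf, hfb⟩
  have hquot : quotAlg (freeAlg V k) θ.r ∈ V :=
    hV.2.2 ⟨_, freeAlg_mem hV k, _, isHom_quot_mk θ.iscon, Quot.mk_surjective⟩
  exact ⟨hV.2.2 ⟨_, hquot, f, hf, hfb.2⟩,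
    finGen_of_surjective (finGen_quotAlg (freeAlg_finGen V k) θ.iscon) hf hfb.2⟩

theorem SPf_KB_subset (hV : IsVariety V) (hInv : InvSubstClosed V B) (hInter : InterClosed V B) :
    SPf (KB V B) ⊆ KB V B := by
  rintro C ⟨hCfg, n, A, hA, e, he, heinj⟩
  have hCV : C ∈ V :=
    hV.2.1 ⟨PiAlg A, hV.1 _ A fun i => (KB_subset_Vfg hV (hA i)).1, e, he, heinj⟩
  obtain ⟨m, h, hh, hs⟩ := exists_isHom_surjective_of_finGen hCV hCfg
  choose k ψ hψ j hj hjinj using fun i => exists_injective_of_mem_KB (hA i)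
  have hcoord : ∀ i, IsHom (freeAlg V m) (quotAlg (freeAlg V (k i)) (ψ i).r)
      (fun a => j i (e (h a) i)) := fun i f x => by
    simp only [hh f x, he f]
    exact hj i f _
  choose θ hθ hθg using fun i => exists_mem_eq_kerRel hV hInv (hψ i) (hcoord i)
  obtain ⟨θ', hθ', hθ'r⟩ := hInter m n θ hθ
  have hker : θ'.r = kerRel h := by
    have hinj : Function.Injective fun c i => j i (e c i) :=
      fun c c' hcc => heinj (funext fun i => hjinj i (congrFun hcc i))
    rw [hθ'r, ← kerRel_comp_of_injective hinj, Function.comp_def, kerRel_pi]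
    simp only [hθg]
  exact ⟨_, ⟨m, θ', hθ', rfl⟩, hker ▸ isomorphic_quotAlg_kerRel hh hs⟩

theorem BK_KB (hV : IsVariety V) (hInv : InvSubstClosed V B) (k : ℕ) : BK V (KB V B) k = B k := by
  refine Set.Subset.antisymm (fun θ hθ => ?_) fun θ hθ => ?_
  · obtain ⟨A, hA, g, hg, hθg⟩ := exists_isHom_kerRel_eq_of_quotAlg_mem_Icl θ.iscon hθ
    obtain ⟨m, ψ, hψ, j, hj, hjinj⟩ := exists_injective_of_mem_KB hA
    obtain ⟨θ', hθ', hθ'r⟩ := exists_mem_eq_kerRel hV hInv hψ (isHom_comp hg hj)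
    rwa [Cong.ext (hθ'r.trans ((kerRel_comp_of_injective hjinj g).trans hθg.symm))] at hθ'
  · exact ⟨_, ⟨_, ⟨k, θ, hθ, rfl⟩, .refl _⟩, .refl _⟩

end Correspondence

/-- Proposition 4 of the paper. The assignments `K ↦ B^K` and
`B ↦ K^B` establish a one-to-one correspondence between the subclasses of `V_fg`
closed under finitely generated subalgebras of finite products and the subfamilies
of `Con(F^V)` closed under inverse substitution and finite intersection. -/
theorem correspondence_SPf {σ : Signature} (V : Set (Alg σ)) (hV : IsVariety V) :
    (∀ K : Set (Alg σ), K ⊆ Vfg V → SPf K = K →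
      (InvSubstClosed V (BK V K) ∧ InterClosed V (BK V K)) ∧ KB V (BK V K) = K) ∧
    (∀ B : ∀ k : ℕ, Set (Cong (freeAlg V k)),
      InvSubstClosed V B → InterClosed V B →
      (KB V B ⊆ Vfg V ∧ SPf (KB V B) = KB V B) ∧ ∀ k : ℕ, BK V (KB V B) k = B k) :=
  ⟨fun _ hKfg hK => ⟨⟨invSubstClosed_BK hV hK.subset, interClosed_BK hK.subset⟩,
      KB_BK hKfg hK.subset⟩,
    fun _ hInv hInter => ⟨⟨KB_subset_Vfg hV, (SPf_KB_subset hV hInv hInter).antisymm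
      (subset_SPf fun _ hA => (KB_subset_Vfg hV hA).2)⟩, BK_KB hV hInv⟩⟩
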